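/- arXiv:1211.0738 — 3 statements merged into one kernel-verified Lean document; each statement's English description precedes it below -/
import Mathlib

section
/- Let (R, m) be a 3-dimensional Cohen–Macaulay local ring, Q = (x₁, x₂, x₃) a parameter ideal, and let 0 → F₃ →^{φ₃} F₂ →^{φ₂} F₁ →^{φ₁} F₀ = R be an acyclic complex of finitely generated free R-modules with Im φ₃ ⊆ Q·F₂. Set a = Im φ₁. Then (a :_R Q)/a ≅ F₃/Q·F₃ as R-modules. -/
set_option linter.unusedSectionVars false

section CQAux
variable {R : Type*} [CommRing R]

private lemma cq_reg_quot {N : Submodule R R} {x : R}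
    (h : IsSMulRegular (R ⧸ N) x) : ∀ r, x * r ∈ N → r ∈ N := by
  intro r hr
  have : x • (Submodule.Quotient.mk r : R ⧸ N) = x • (0 : R ⧸ N) := by
    rw [smul_zero, ← Submodule.Quotient.mk_smul, Submodule.Quotient.mk_eq_zero]
    simpa [smul_eq_mul] using hr
  exact (Submodule.Quotient.mk_eq_zero N).mp (h this)

variable (x₁ x₂ x₃ : R)
variable (hr1 : ∀ r : R, x₁ * r = 0 → r = 0)
  (hr2 : ∀ r : R, x₂ * r ∈ Ideal.span {x₁} → r ∈ Ideal.span {x₁})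
  (hr3 : ∀ r : R, x₃ * r ∈ Ideal.span ({x₁, x₂} : Set R) → r ∈ Ideal.span ({x₁, x₂} : Set R))

include hr1 hr2 hr3 in
private lemma cq_koszul1R (a b c : R) (h : x₁ * a + x₂ * b + x₃ * c = 0) :
    ∃ p q r : R, a = -(x₂ * p) - x₃ * q ∧ b = x₁ * p - x₃ * r ∧ c = x₁ * q + x₂ * r := by
  have hc : c ∈ Ideal.span ({x₁, x₂} : Set R) := by
    refine hr3 c ?_
    rw [Ideal.mem_span_pair]
    exact ⟨-a, -b, by linear_combination -h⟩
  obtain ⟨q, r, hqr⟩ := Ideal.mem_span_pair.mp hc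
  have hb : b + x₃ * r ∈ Ideal.span ({x₁} : Set R) := by
    refine hr2 _ ?_
    rw [Ideal.mem_span_singleton']
    exact ⟨-(a + x₃ * q), by linear_combination -h - x₃ * hqr⟩
  obtain ⟨p, hp⟩ := Ideal.mem_span_singleton'.mp hb
  refine ⟨p, q, r, ?_, by linear_combination -hp, by linear_combination -hqr⟩
  have := hr1 (a + x₂ * p + x₃ * q) (by linear_combination h + x₂ * hp + x₃ * hqr)
  linear_combination this

include hr1 hr2 in
private lemma cq_koszul0R (c₁ c₂ c₃ : R) (h12 : x₁ * c₂ = x₂ * c₁) (h13 : x₁ * c₃ = x₃ * c₁) :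
    ∃ t : R, c₁ = x₁ * t ∧ c₂ = x₂ * t ∧ c₃ = x₃ * t := by
  have hc1 : c₁ ∈ Ideal.span ({x₁} : Set R) := by
    refine hr2 _ ?_
    rw [Ideal.mem_span_singleton']
    exact ⟨c₂, by linear_combination h12⟩
  obtain ⟨t, ht⟩ := Ideal.mem_span_singleton'.mp hc1
  refine ⟨t, by linear_combination -ht, ?_, ?_⟩
  · have := hr1 (c₂ - x₂ * t) (by linear_combination h12 - x₂ * ht)
    linear_combination this
  · have := hr1 (c₃ - x₃ * t) (by linear_combination h13 - x₃ * ht)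
    linear_combination this

variable {M : Type*} [AddCommGroup M] [Module R M] [Module.Free R M] [Module.Finite R M]

include hr1 hr2 hr3 in
private lemma cq_koszul1M (a b c : M) (h : x₁ • a + x₂ • b + x₃ • c = 0) :
    ∃ p q r : M, a = -(x₂ • p) - x₃ • q ∧ b = x₁ • p - x₃ • r ∧ c = x₁ • q + x₂ • r := by
  classical
  let B := Module.Free.chooseBasis R M
  have hco : ∀ i, x₁ * B.repr a i + x₂ * B.repr b i + x₃ * B.repr c i = 0 := by
    intro i
    have := congrArg (fun m => B.repr m i) h
    simpa using this
  choose P Q' T hP hQ hT using fun i => cq_koszul1R x₁ x₂ x₃ hr1 hr2 hr3 _ _ _ (hco i)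
  refine ⟨B.repr.symm (Finsupp.equivFunOnFinite.symm P),
    B.repr.symm (Finsupp.equivFunOnFinite.symm Q'),
    B.repr.symm (Finsupp.equivFunOnFinite.symm T), ?_, ?_, ?_⟩ <;>
  · apply B.repr.injective
    ext i
    simp [hP i, hQ i, hT i]

include hr1 hr2 in
private lemma cq_koszul0M (c₁ c₂ c₃ : M) (h12 : x₁ • c₂ = x₂ • c₁) (h13 : x₁ • c₃ = x₃ • c₁) :
    ∃ s : M, c₁ = x₁ • s ∧ c₂ = x₂ • s ∧ c₃ = x₃ • s := by
  classical
  let B := Module.Free.chooseBasis R M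
  have h12' : ∀ i, x₁ * B.repr c₂ i = x₂ * B.repr c₁ i := by
    intro i; have := congrArg (fun m => B.repr m i) h12; simpa using this
  have h13' : ∀ i, x₁ * B.repr c₃ i = x₃ * B.repr c₁ i := by
    intro i; have := congrArg (fun m => B.repr m i) h13; simpa using this
  choose T h1 h2 h3 using fun i => cq_koszul0R x₁ x₂ x₃ hr1 hr2 _ _ _ (h12' i) (h13' i)
  refine ⟨B.repr.symm (Finsupp.equivFunOnFinite.symm T), ?_, ?_, ?_⟩ <;>
  · apply B.repr.injective
    ext i
    simp [h1 i, h2 i, h3 i]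

private lemma cq_memQsmul {m : M} :
    m ∈ (Ideal.span ({x₁, x₂, x₃} : Set R)) • (⊤ : Submodule R M) ↔
      ∃ a b c : M, m = x₁ • a + x₂ • b + x₃ • c := by
  constructor
  · intro hm
    refine Submodule.smul_induction_on hm ?_ ?_
    · intro r hr n _
      rw [show ({x₁, x₂, x₃} : Set R) = insert x₁ {x₂, x₃} from rfl] at hr
      obtain ⟨a, z, hz, rfl⟩ := Ideal.mem_span_insert.mp hr
      obtain ⟨b, z', hz', rfl⟩ := Ideal.mem_span_insert.mp hz
      obtain ⟨c, rfl⟩ := Ideal.mem_span_singleton'.mp hz'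
      exact ⟨a • n, b • n, c • n, by module⟩
    · rintro x y ⟨a, b, c, rfl⟩ ⟨a', b', c', rfl⟩
      exact ⟨a + a', b + b', c + c', by module⟩
  · rintro ⟨a, b, c, rfl⟩
    have h1 : x₁ ∈ Ideal.span ({x₁, x₂, x₃} : Set R) := Ideal.subset_span (by simp)
    have h2 : x₂ ∈ Ideal.span ({x₁, x₂, x₃} : Set R) := Ideal.subset_span (by simp)
    have h3 : x₃ ∈ Ideal.span ({x₁, x₂, x₃} : Set R) := Ideal.subset_span (by simp)
    exact Submodule.add_mem _ (Submodule.add_mem _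
      (Submodule.smul_mem_smul h1 trivial) (Submodule.smul_mem_smul h2 trivial))
      (Submodule.smul_mem_smul h3 trivial)

end CQAux

section CQMain

variable {R : Type*} [CommRing R] (x₁ x₂ x₃ : R)
  {F₁ F₂ F₃ : Type*}
  [AddCommGroup F₁] [Module R F₁] [Module.Free R F₁] [Module.Finite R F₁]
  [AddCommGroup F₂] [Module R F₂] [Module.Free R F₂] [Module.Finite R F₂]
  [AddCommGroup F₃] [Module R F₃] [Module.Free R F₃] [Module.Finite R F₃]
  (φ₁ : F₁ →ₗ[R] R) (φ₂ : F₂ →ₗ[R] F₁) (φ₃ : F₃ →ₗ[R] F₂)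

/-- The relation encoding the comparison map from the Koszul complex to `F•`
lifting the homomorphism `R/Q → R/a`, `1 ↦ t`. -/
private def cqRel (t : R) (w : F₃) : Prop :=
  ∃ u₁ u₂ u₃ : F₁, ∃ v₁₂ v₁₃ v₂₃ : F₂,
    φ₁ u₁ = t * x₁ ∧ φ₁ u₂ = t * x₂ ∧ φ₁ u₃ = t * x₃ ∧
    φ₂ v₁₂ = x₁ • u₂ - x₂ • u₁ ∧ φ₂ v₁₃ = x₁ • u₃ - x₃ • u₁ ∧
    φ₂ v₂₃ = x₂ • u₃ - x₃ • u₂ ∧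
    φ₃ w = x₁ • v₂₃ - x₂ • v₁₃ + x₃ • v₁₂

variable {x₁ x₂ x₃ φ₁ φ₂ φ₃}

private lemma cq_exists (h32 : Function.Exact φ₃ φ₂) (h21 : Function.Exact φ₂ φ₁)
    {t : R} (ht : t ∈ (LinearMap.range φ₁).colon (Ideal.span ({x₁, x₂, x₃} : Set R))) :
    ∃ w, cqRel x₁ x₂ x₃ φ₁ φ₂ φ₃ t w := by
  have hx : ∀ x ∈ ({x₁, x₂, x₃} : Set R), t * x ∈ LinearMap.range φ₁ := by
    intro x hxm
    simpa [smul_eq_mul] using Submodule.mem_colon.mp ht x (Ideal.subset_span hxm)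
  obtain ⟨u₁, hu₁⟩ := hx x₁ (by simp)
  obtain ⟨u₂, hu₂⟩ := hx x₂ (by simp)
  obtain ⟨u₃, hu₃⟩ := hx x₃ (by simp)
  obtain ⟨v₁₂, hv₁₂⟩ := (h21 (x₁ • u₂ - x₂ • u₁)).mp (by
    rw [map_sub, map_smul, map_smul, hu₁, hu₂, smul_eq_mul, smul_eq_mul]; ring)
  obtain ⟨v₁₃, hv₁₃⟩ := (h21 (x₁ • u₃ - x₃ • u₁)).mp (by
    rw [map_sub, map_smul, map_smul, hu₁, hu₃, smul_eq_mul, smul_eq_mul]; ring)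
  obtain ⟨v₂₃, hv₂₃⟩ := (h21 (x₂ • u₃ - x₃ • u₂)).mp (by
    rw [map_sub, map_smul, map_smul, hu₂, hu₃, smul_eq_mul, smul_eq_mul]; ring)
  obtain ⟨w, hw⟩ := (h32 (x₁ • v₂₃ - x₂ • v₁₃ + x₃ • v₁₂)).mp (by
    rw [map_add, map_sub, map_smul, map_smul, map_smul, hv₁₂, hv₁₃, hv₂₃]; module)
  exact ⟨w, u₁, u₂, u₃, v₁₂, v₁₃, v₂₃, hu₁, hu₂, hu₃, hv₁₂, hv₁₃, hv₂₃, hw⟩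

private lemma cq_unique (h3 : Function.Injective φ₃)
    (h32 : Function.Exact φ₃ φ₂) (h21 : Function.Exact φ₂ φ₁)
    {t : R} {w w' : F₃} (hw : cqRel x₁ x₂ x₃ φ₁ φ₂ φ₃ t w)
    (hw' : cqRel x₁ x₂ x₃ φ₁ φ₂ φ₃ t w') :
    w - w' ∈ (Ideal.span ({x₁, x₂, x₃} : Set R)) • (⊤ : Submodule R F₃) := by
  obtain ⟨u₁, u₂, u₃, v₁₂, v₁₃, v₂₃, hu₁, hu₂, hu₃, hv₁₂, hv₁₃, hv₂₃, hw⟩ := hw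
  obtain ⟨u₁', u₂', u₃', v₁₂', v₁₃', v₂₃', hu₁', hu₂', hu₃', hv₁₂', hv₁₃', hv₂₃', hw'⟩ := hw'
  obtain ⟨b₁, hb₁⟩ := (h21 (u₁ - u₁')).mp (by rw [map_sub, hu₁, hu₁', sub_self])
  obtain ⟨b₂, hb₂⟩ := (h21 (u₂ - u₂')).mp (by rw [map_sub, hu₂, hu₂', sub_self])
  obtain ⟨b₃, hb₃⟩ := (h21 (u₃ - u₃')).mp (by rw [map_sub, hu₃, hu₃', sub_self])
  obtain ⟨c₁₂, hc₁₂⟩ := (h32 (v₁₂ - v₁₂' - (x₁ • b₂ - x₂ • b₁))).mp (by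
    rw [map_sub, map_sub, map_sub, map_smul, map_smul, hv₁₂, hv₁₂', hb₁, hb₂]; module)
  obtain ⟨c₁₃, hc₁₃⟩ := (h32 (v₁₃ - v₁₃' - (x₁ • b₃ - x₃ • b₁))).mp (by
    rw [map_sub, map_sub, map_sub, map_smul, map_smul, hv₁₃, hv₁₃', hb₁, hb₃]; module)
  obtain ⟨c₂₃, hc₂₃⟩ := (h32 (v₂₃ - v₂₃' - (x₂ • b₃ - x₃ • b₂))).mp (by
    rw [map_sub, map_sub, map_sub, map_smul, map_smul, hv₂₃, hv₂₃', hb₂, hb₃]; module)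
  have key : φ₃ (w - w') = φ₃ (x₁ • c₂₃ - x₂ • c₁₃ + x₃ • c₁₂) := by
    rw [map_sub, hw, hw', map_add, map_sub, map_smul, map_smul, map_smul,
      hc₂₃, hc₁₃, hc₁₂]
    module
  have hww' := h3 key
  exact (cq_memQsmul x₁ x₂ x₃).mpr ⟨c₂₃, -c₁₃, c₁₂, by rw [hww']; module⟩

private lemma cq_add {t t' : R} {w w' : F₃} (h : cqRel x₁ x₂ x₃ φ₁ φ₂ φ₃ t w)
    (h' : cqRel x₁ x₂ x₃ φ₁ φ₂ φ₃ t' w') : cqRel x₁ x₂ x₃ φ₁ φ₂ φ₃ (t + t') (w + w') := by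
  obtain ⟨u₁, u₂, u₃, v₁₂, v₁₃, v₂₃, hu₁, hu₂, hu₃, hv₁₂, hv₁₃, hv₂₃, hw⟩ := h
  obtain ⟨u₁', u₂', u₃', v₁₂', v₁₃', v₂₃', hu₁', hu₂', hu₃', hv₁₂', hv₁₃', hv₂₃', hw'⟩ := h'
  refine ⟨u₁ + u₁', u₂ + u₂', u₃ + u₃', v₁₂ + v₁₂', v₁₃ + v₁₃', v₂₃ + v₂₃',
    by rw [map_add, hu₁, hu₁']; ring, by rw [map_add, hu₂, hu₂']; ring,
    by rw [map_add, hu₃, hu₃']; ring,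
    by rw [map_add, hv₁₂, hv₁₂']; module, by rw [map_add, hv₁₃, hv₁₃']; module,
    by rw [map_add, hv₂₃, hv₂₃']; module, by rw [map_add, hw, hw']; module⟩

private lemma cq_smul (r : R) {t : R} {w : F₃} (h : cqRel x₁ x₂ x₃ φ₁ φ₂ φ₃ t w) :
    cqRel x₁ x₂ x₃ φ₁ φ₂ φ₃ (r * t) (r • w) := by
  obtain ⟨u₁, u₂, u₃, v₁₂, v₁₃, v₂₃, hu₁, hu₂, hu₃, hv₁₂, hv₁₃, hv₂₃, hw⟩ := h
  refine ⟨r • u₁, r • u₂, r • u₃, r • v₁₂, r • v₁₃, r • v₂₃,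
    by rw [map_smul, hu₁, smul_eq_mul]; ring, by rw [map_smul, hu₂, smul_eq_mul]; ring,
    by rw [map_smul, hu₃, smul_eq_mul]; ring,
    by rw [map_smul, hv₁₂]; module, by rw [map_smul, hv₁₃]; module,
    by rw [map_smul, hv₂₃]; module, by rw [map_smul, hw]; module⟩

private lemma cq_zero {t : R} (h : t ∈ LinearMap.range φ₁) :
    cqRel x₁ x₂ x₃ φ₁ φ₂ φ₃ t 0 := by
  obtain ⟨u₀, hu₀⟩ := h
  refine ⟨x₁ • u₀, x₂ • u₀, x₃ • u₀, 0, 0, 0,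
    by rw [map_smul, hu₀, smul_eq_mul]; ring, by rw [map_smul, hu₀, smul_eq_mul]; ring,
    by rw [map_smul, hu₀, smul_eq_mul]; ring,
    by rw [map_zero]; module, by rw [map_zero]; module, by rw [map_zero]; module,
    by rw [map_zero]; module⟩

private lemma cq_inj
    (hr1 : ∀ r : R, x₁ * r = 0 → r = 0)
    (hr2 : ∀ r : R, x₂ * r ∈ Ideal.span {x₁} → r ∈ Ideal.span {x₁})
    (hr3 : ∀ r : R, x₃ * r ∈ Ideal.span ({x₁, x₂} : Set R) → r ∈ Ideal.span ({x₁, x₂} : Set R))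
    (h32 : Function.Exact φ₃ φ₂) (h21 : Function.Exact φ₂ φ₁)
    {t : R} {w : F₃} (h : cqRel x₁ x₂ x₃ φ₁ φ₂ φ₃ t w)
    (hwQ : w ∈ (Ideal.span ({x₁, x₂, x₃} : Set R)) • (⊤ : Submodule R F₃)) :
    t ∈ LinearMap.range φ₁ := by
  obtain ⟨u₁, u₂, u₃, v₁₂, v₁₃, v₂₃, hu₁, hu₂, hu₃, hv₁₂, hv₁₃, hv₂₃, hw⟩ := h
  obtain ⟨w₁, w₂, w₃, hw123⟩ := (cq_memQsmul x₁ x₂ x₃).mp hwQ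
  have φ₂φ₃ := h32.apply_apply_eq_zero
  have φ₁φ₂ := h21.apply_apply_eq_zero
  have h0 : x₁ • (v₂₃ - φ₃ w₁) + x₂ • (-(v₁₃ + φ₃ w₂)) + x₃ • (v₁₂ - φ₃ w₃) = 0 := by
    have h1 : φ₃ w = x₁ • φ₃ w₁ + x₂ • φ₃ w₂ + x₃ • φ₃ w₃ := by
      rw [hw123, map_add, map_add, map_smul, map_smul, map_smul]
    linear_combination (norm := module) h1 - hw
  obtain ⟨p, q, r, hA, hB, hC⟩ := cq_koszul1M x₁ x₂ x₃ hr1 hr2 hr3 _ _ _ h0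
  have e23 : x₂ • u₃ - x₃ • u₂ = -(x₂ • φ₂ p) - x₃ • φ₂ q := by
    have h := congrArg φ₂ hA
    simp only [map_sub, map_neg, map_smul, φ₂φ₃, sub_zero, hv₂₃] at h
    exact h
  have e13 : -(x₁ • u₃ - x₃ • u₁) = x₁ • φ₂ p - x₃ • φ₂ r := by
    have h := congrArg φ₂ hB
    simp only [map_sub, map_neg, map_add, map_smul, φ₂φ₃, sub_zero, add_zero, hv₁₃] at h
    exact h
  have e12 : x₁ • u₂ - x₂ • u₁ = x₁ • φ₂ q + x₂ • φ₂ r := by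
    have h := congrArg φ₂ hC
    simp only [map_sub, map_add, map_smul, φ₂φ₃, sub_zero, hv₁₂] at h
    exact h
  have r12 : x₁ • (u₂ - φ₂ q) = x₂ • (u₁ + φ₂ r) := by
    linear_combination (norm := module) e12
  have r13 : x₁ • (u₃ + φ₂ p) = x₃ • (u₁ + φ₂ r) := by
    linear_combination (norm := module) -e13
  obtain ⟨s, hs₁, hs₂, hs₃⟩ :=
    cq_koszul0M x₁ x₂ x₃ hr1 hr2 (u₁ + φ₂ r) (u₂ - φ₂ q) (u₃ + φ₂ p) r12 r13
  have hts : x₁ * (t - φ₁ s) = 0 := by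
    have h1 : φ₁ (u₁ + φ₂ r) = t * x₁ := by rw [map_add, φ₁φ₂, add_zero, hu₁]
    have h2 : φ₁ (u₁ + φ₂ r) = x₁ * φ₁ s := by
      rw [hs₁, map_smul, smul_eq_mul]
    linear_combination h2 - h1
  exact ⟨s, by linear_combination -(hr1 _ hts)⟩

private lemma cq_surj
    (hr1 : ∀ r : R, x₁ * r = 0 → r = 0)
    (hr2 : ∀ r : R, x₂ * r ∈ Ideal.span {x₁} → r ∈ Ideal.span {x₁})
    (hr3 : ∀ r : R, x₃ * r ∈ Ideal.span ({x₁, x₂} : Set R) → r ∈ Ideal.span ({x₁, x₂} : Set R))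
    (h32 : Function.Exact φ₃ φ₂) (h21 : Function.Exact φ₂ φ₁)
    (him : LinearMap.range φ₃ ≤ (Ideal.span ({x₁, x₂, x₃} : Set R)) • (⊤ : Submodule R F₂))
    (w : F₃) :
    ∃ t, t ∈ (LinearMap.range φ₁).colon (Ideal.span ({x₁, x₂, x₃} : Set R)) ∧
      cqRel x₁ x₂ x₃ φ₁ φ₂ φ₃ t w := by
  have φ₂φ₃ := h32.apply_apply_eq_zero
  have φ₁φ₂ := h21.apply_apply_eq_zero
  obtain ⟨a₁, a₂, a₃, hd⟩ := (cq_memQsmul x₁ x₂ x₃).mp (him (LinearMap.mem_range_self φ₃ w))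
  have h0 : x₁ • φ₂ a₁ + x₂ • φ₂ a₂ + x₃ • φ₂ a₃ = 0 := by
    have h := φ₂φ₃ w
    rw [hd, map_add, map_add, map_smul, map_smul, map_smul] at h
    exact h
  obtain ⟨p, q, r, hA, hB, hC⟩ := cq_koszul1M x₁ x₂ x₃ hr1 hr2 hr3 _ _ _ h0
  -- u₁ = -r, u₂ = q, u₃ = -p ; v₂₃ = a₁, v₁₃ = -a₂, v₁₂ = a₃
  have h12 : x₁ * φ₁ q = x₂ * (-(φ₁ r)) := by
    have h := congrArg φ₁ hC
    rw [map_add, map_smul, map_smul, φ₁φ₂, smul_eq_mul, smul_eq_mul] at h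
    linear_combination -h
  have h13 : x₁ * (-(φ₁ p)) = x₃ * (-(φ₁ r)) := by
    have h := congrArg φ₁ hB
    rw [map_sub, map_smul, map_smul, φ₁φ₂, smul_eq_mul, smul_eq_mul] at h
    linear_combination h
  obtain ⟨t, ht₁, ht₂, ht₃⟩ := cq_koszul0R x₁ x₂ x₃ hr1 hr2 (-(φ₁ r)) (φ₁ q) (-(φ₁ p)) h12 h13
  have hu₁ : φ₁ (-r) = t * x₁ := by rw [map_neg]; linear_combination ht₁
  have hu₂ : φ₁ q = t * x₂ := by linear_combination ht₂
  have hu₃ : φ₁ (-p) = t * x₃ := by rw [map_neg]; linear_combination ht₃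
  refine ⟨t, ?_, -r, q, -p, a₃, -a₂, a₁, hu₁, hu₂, hu₃, ?_, ?_, ?_, ?_⟩
  · rw [Submodule.mem_colon]
    intro y hy
    refine Submodule.span_induction ?_ ?_ ?_ ?_ hy
    · rintro z hz
      simp only [Set.mem_insert_iff, Set.mem_singleton_iff] at hz
      rcases hz with rfl | rfl | rfl
      · exact ⟨-r, by rw [hu₁, smul_eq_mul]⟩
      · exact ⟨q, by rw [hu₂, smul_eq_mul]⟩
      · exact ⟨-p, by rw [hu₃, smul_eq_mul]⟩
    · simp
    · intro z z' _ _ hz hz'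
      rw [smul_add]
      exact Submodule.add_mem _ hz hz'
    · intro c z _ hz
      rw [smul_comm]
      exact Submodule.smul_mem _ c hz
  · rw [hC]; module
  · rw [map_neg, hB]; module
  · rw [hA]; module
  · rw [hd]; module

end CQMain

section CQFinal

variable {R : Type*} [CommRing R]
  {F₁ F₂ F₃ : Type*}
  [AddCommGroup F₁] [Module R F₁] [Module.Free R F₁] [Module.Finite R F₁]
  [AddCommGroup F₂] [Module R F₂] [Module.Free R F₂] [Module.Finite R F₂]
  [AddCommGroup F₃] [Module R F₃] [Module.Free R F₃] [Module.Finite R F₃]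

private theorem cq_main (x₁ x₂ x₃ : R)
    (hr1 : ∀ r : R, x₁ * r = 0 → r = 0)
    (hr2 : ∀ r : R, x₂ * r ∈ Ideal.span {x₁} → r ∈ Ideal.span {x₁})
    (hr3 : ∀ r : R, x₃ * r ∈ Ideal.span ({x₁, x₂} : Set R) → r ∈ Ideal.span ({x₁, x₂} : Set R))
    (φ₁ : F₁ →ₗ[R] R) (φ₂ : F₂ →ₗ[R] F₁) (φ₃ : F₃ →ₗ[R] F₂)
    (h3 : Function.Injective φ₃)
    (h32 : Function.Exact φ₃ φ₂) (h21 : Function.Exact φ₂ φ₁)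
    (him : LinearMap.range φ₃ ≤ Ideal.span ({x₁, x₂, x₃} : Set R) • (⊤ : Submodule R F₂)) :
    Nonempty
      ((↥(Submodule.colon (LinearMap.range φ₁)
            ((Ideal.span ({x₁, x₂, x₃} : Set R)) : Submodule R R)) ⧸
          Submodule.comap
            (Submodule.colon (LinearMap.range φ₁)
              ((Ideal.span ({x₁, x₂, x₃} : Set R)) : Submodule R R)).subtype
            (LinearMap.range φ₁))
        ≃ₗ[R] (F₃ ⧸ ((Ideal.span ({x₁, x₂, x₃} : Set R)) • (⊤ : Submodule R F₃)))) := by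
  classical
  set Q' : Ideal R := Ideal.span ({x₁, x₂, x₃} : Set R) with hQ'
  set C : Submodule R R := Submodule.colon (LinearMap.range φ₁) (Q' : Submodule R R) with hC
  have hex : ∀ t : ↥C, ∃ w : F₃, cqRel x₁ x₂ x₃ φ₁ φ₂ φ₃ t.1 w :=
    fun t => cq_exists h32 h21 t.2
  choose W hW using hex
  let f : ↥C →ₗ[R] F₃ ⧸ (Q' • (⊤ : Submodule R F₃)) :=
    { toFun := fun t => Submodule.Quotient.mk (W t)
      map_add' := by
        intro t t'
        refine (Submodule.Quotient.eq _).mpr ?_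
        exact cq_unique h3 h32 h21 (hW (t + t')) (cq_add (hW t) (hW t'))
      map_smul' := by
        intro r t
        refine (Submodule.Quotient.eq _).mpr ?_
        have hsm : cqRel x₁ x₂ x₃ φ₁ φ₂ φ₃ ((r • t : ↥C) : R) (r • W t) := by
          have : ((r • t : ↥C) : R) = r * (t : R) := rfl
          rw [this]
          exact cq_smul r (hW t)
        have := cq_unique h3 h32 h21 (hW (r • t)) hsm
        simpa using this }
  have hsurj : Function.Surjective f := by
    intro y
    obtain ⟨w, rfl⟩ := Submodule.Quotient.mk_surjective _ y
    obtain ⟨t, htc, hrel⟩ := cq_surj hr1 hr2 hr3 h32 h21 him w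
    exact ⟨⟨t, htc⟩, (Submodule.Quotient.eq _).mpr (cq_unique h3 h32 h21 (hW ⟨t, htc⟩) hrel)⟩
  have hker : LinearMap.ker f = Submodule.comap C.subtype (LinearMap.range φ₁) := by
    ext t
    simp only [LinearMap.mem_ker, Submodule.mem_comap, Submodule.subtype_apply]
    constructor
    · intro h
      have hmem : W t ∈ Q' • (⊤ : Submodule R F₃) := by
        have : Submodule.Quotient.mk (W t) = (0 : F₃ ⧸ (Q' • (⊤ : Submodule R F₃))) := h
        simpa [Submodule.Quotient.mk_eq_zero] using this
      exact cq_inj hr1 hr2 hr3 h32 h21 (hW t) hmem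
    · intro h
      have h0 := cq_zero (φ₁ := φ₁) (φ₂ := φ₂) (φ₃ := φ₃) (x₁ := x₁) (x₂ := x₂) (x₃ := x₃) h
      have := cq_unique h3 h32 h21 (hW t) h0
      show Submodule.Quotient.mk (W t) = (0 : F₃ ⧸ (Q' • (⊤ : Submodule R F₃)))
      rw [Submodule.Quotient.mk_eq_zero]
      simpa using this
  exact ⟨(Submodule.quotEquivOfEq _ _ hker.symm).trans (f.quotKerEquivOfSurjective hsurj)⟩

end CQFinal

open IsLocalRing

/-- Let `(R, m)` be a 3-dimensional Cohen–Macaulay local ring (every system of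
parameters is a regular sequence), `Q = (x₁, x₂, x₃)` a parameter ideal, and
`0 → F₃ → F₂ → F₁ → R` an acyclic complex of finitely generated free modules
with `Im φ₃ ⊆ Q F₂`.  With `a = Im φ₁`, one has `(a :_R Q)/a ≅ F₃/QF₃`. -/
theorem colon_quotient_iso_top_free_module
    {R : Type*} [CommRing R] [IsNoetherianRing R] [IsLocalRing R]
    (hdim : ringKrullDim R = 3)
    (hCM : ∀ u v w : R, (Ideal.span {u, v, w}).radical = maximalIdeal R →
      RingTheory.Sequence.IsRegular R [u, v, w])
    (x₁ x₂ x₃ : R)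
    (Q : Ideal R) (hQ : Q = Ideal.span {x₁, x₂, x₃})
    (hsop : Q.radical = maximalIdeal R)
    (F₁ F₂ F₃ : Type*)
    [AddCommGroup F₁] [Module R F₁] [Module.Free R F₁] [Module.Finite R F₁]
    [AddCommGroup F₂] [Module R F₂] [Module.Free R F₂] [Module.Finite R F₂]
    [AddCommGroup F₃] [Module R F₃] [Module.Free R F₃] [Module.Finite R F₃]
    (φ₁ : F₁ →ₗ[R] R) (φ₂ : F₂ →ₗ[R] F₁) (φ₃ : F₃ →ₗ[R] F₂)
    (h3 : Function.Injective φ₃)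
    (h32 : Function.Exact φ₃ φ₂) (h21 : Function.Exact φ₂ φ₁)
    (him : LinearMap.range φ₃ ≤ Q • (⊤ : Submodule R F₂)) :
    Nonempty
      ((↥(Submodule.colon (LinearMap.range φ₁) (Q : Submodule R R)) ⧸
          Submodule.comap
            (Submodule.colon (LinearMap.range φ₁) (Q : Submodule R R)).subtype
            (LinearMap.range φ₁))
        ≃ₗ[R] (F₃ ⧸ (Q • (⊤ : Submodule R F₃)))) := by
  subst hQ
  have hreg := (hCM x₁ x₂ x₃ hsop).toIsWeaklyRegular.regular_mod_prev
  have smul_top : ∀ I : Ideal R, I • (⊤ : Submodule R R) = I := by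
    intro I; rw [smul_eq_mul, Ideal.mul_top]
  -- x₁ is a nonzerodivisor
  have h0 := hreg 0 (by norm_num)
  have hN0 : (Ideal.ofList ([x₁, x₂, x₃].take 0) • ⊤ : Submodule R R) = ⊥ := by
    simp
  rw [hN0] at h0
  have hr1 : ∀ r : R, x₁ * r = 0 → r = 0 := by
    intro r hr
    have := cq_reg_quot h0 r (by simpa using hr)
    simpa using this
  -- x₂ is a nonzerodivisor mod (x₁)
  have h1 := hreg 1 (by norm_num)
  have hN1 : (Ideal.ofList ([x₁, x₂, x₃].take 1) • ⊤ : Submodule R R) =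
      Ideal.span ({x₁} : Set R) := by
    rw [show [x₁, x₂, x₃].take 1 = [x₁] from rfl, Ideal.ofList_singleton, smul_top]
  rw [hN1] at h1
  have hr2 := cq_reg_quot h1
  -- x₃ is a nonzerodivisor mod (x₁, x₂)
  have h2 := hreg 2 (by norm_num)
  have hN2 : (Ideal.ofList ([x₁, x₂, x₃].take 2) • ⊤ : Submodule R R) =
      Ideal.span ({x₁, x₂} : Set R) := by
    rw [show [x₁, x₂, x₃].take 2 = [x₁, x₂] from rfl, smul_top, Ideal.ofList_cons,
      Ideal.ofList_singleton]
    exact (Ideal.span_insert x₁ {x₂}).symm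
  rw [hN2] at h2
  have hr3 := cq_reg_quot h2
  exact cq_main x₁ x₂ x₃ hr1 hr2 hr3 φ₁ φ₂ φ₃ h3 h32 h21 him
end

section
/- With R, x, y, z, and a = z^{γ+γ'} − x^{α'}y^β, b = x^{α+α'} − y^{β'}z^γ, c = y^{β+β'} − x^α z^{γ'} as above, any two of the elements a, b, c form part of a system of parameters for R; in particular any two of them form a regular sequence on R. -/
open IsLocalRing

/-- A two-term prefix of a regular sequence of length three is regular,
provided the ideal it generates is proper. -/
lemma aux_prefix_two {R : Type*} [CommRing R] {u v w : R}
    (h : RingTheory.Sequence.IsRegular R [u, v, w])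
    (hne : Ideal.span {u, v} ≠ ⊤) : RingTheory.Sequence.IsRegular R [u, v] := by
  have hw := h.toIsWeaklyRegular.regular_mod_prev
  refine ⟨⟨fun i hi => ?_⟩, ?_⟩
  · simp only [List.length_cons, List.length_nil] at hi
    interval_cases i
    · exact hw 0 (by simp)
    · exact hw 1 (by simp)
  · intro hEq
    apply hne
    have h1 : Ideal.ofList [u, v] = Ideal.span {u, v} := by
      simp [Ideal.span_insert]
    have h2 : Ideal.ofList [u, v] • (⊤ : Submodule R R) = Ideal.ofList [u, v] := by
      rw [smul_eq_mul, Ideal.mul_top]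
    rw [← h1, ← h2, ← hEq]

/-- Any two of the maximal minors `a, b, c` of
`((x^α, y^β, z^γ), (y^β', z^γ', x^α'))` form part of a system of parameters of
the 3-dimensional Cohen–Macaulay local ring `R`; in particular any two of them
form a regular sequence on `R`. -/
theorem minors_pairs_are_ssop
    {R : Type*} [CommRing R] [IsNoetherianRing R] [IsLocalRing R]
    (hdim : ringKrullDim R = 3)
    (hCM : ∀ u v w : R, (Ideal.span {u, v, w}).radical = maximalIdeal R →
      RingTheory.Sequence.IsRegular R [u, v, w])
    (x y z : R) (hsop : (Ideal.span {x, y, z}).radical = maximalIdeal R)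
    (α β γ α' β' γ' : ℕ)
    (hα : 0 < α) (hβ : 0 < β) (hγ : 0 < γ)
    (hα' : 0 < α') (hβ' : 0 < β') (hγ' : 0 < γ')
    (a b c : R)
    (ha : a = z ^ (γ + γ') - x ^ α' * y ^ β)
    (hb : b = x ^ (α + α') - y ^ β' * z ^ γ)
    (hc : c = y ^ (β + β') - x ^ α * z ^ γ') :
    ∀ u v : R,
      ((u, v) = (a, b) ∨ (u, v) = (b, a) ∨ (u, v) = (a, c) ∨
        (u, v) = (c, a) ∨ (u, v) = (b, c) ∨ (u, v) = (c, b)) →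
      (∃ w : R, (Ideal.span {u, v, w}).radical = maximalIdeal R) ∧
        RingTheory.Sequence.IsRegular R [u, v] := by
  -- x, y, z lie in the maximal ideal
  have hx : x ∈ maximalIdeal R := by
    rw [← hsop]; exact Ideal.le_radical (Ideal.subset_span (by simp))
  have hy : y ∈ maximalIdeal R := by
    rw [← hsop]; exact Ideal.le_radical (Ideal.subset_span (by simp))
  have hz : z ∈ maximalIdeal R := by
    rw [← hsop]; exact Ideal.le_radical (Ideal.subset_span (by simp))
  -- a, b, c lie in the maximal ideal
  have hma : a ∈ maximalIdeal R := by
    rw [ha]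
    exact sub_mem (Ideal.pow_mem_of_mem _ hz _ (by omega))
      (Ideal.mul_mem_right _ _ (Ideal.pow_mem_of_mem _ hx _ hα'))
  have hmb : b ∈ maximalIdeal R := by
    rw [hb]
    exact sub_mem (Ideal.pow_mem_of_mem _ hx _ (by omega))
      (Ideal.mul_mem_right _ _ (Ideal.pow_mem_of_mem _ hy _ hβ'))
  have hmc : c ∈ maximalIdeal R := by
    rw [hc]
    exact sub_mem (Ideal.pow_mem_of_mem _ hy _ (by omega))
      (Ideal.mul_mem_right _ _ (Ideal.pow_mem_of_mem _ hx _ hα))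
  -- key criterion: if u, v, w ∈ m and x, y, z ∈ rad (u,v,w), then rad (u,v,w) = m
  have key : ∀ u v w : R, u ∈ maximalIdeal R → v ∈ maximalIdeal R →
      w ∈ maximalIdeal R →
      x ∈ (Ideal.span {u, v, w}).radical → y ∈ (Ideal.span {u, v, w}).radical →
      z ∈ (Ideal.span {u, v, w}).radical →
      (Ideal.span {u, v, w}).radical = maximalIdeal R := by
    intro u v w hu hv hw hxr hyr hzr
    apply le_antisymm
    · have hprime : (maximalIdeal R).radical = maximalIdeal R :=
        ((maximalIdeal.isMaximal R).isPrime).radical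
      calc (Ideal.span {u, v, w}).radical
          ≤ (maximalIdeal R).radical := by
            apply Ideal.radical_mono
            rw [Ideal.span_le]
            intro r hr
            rcases hr with rfl | rfl | rfl
            · exact hu
            · exact hv
            · exact hw
        _ = maximalIdeal R := hprime
    · rw [← hsop]
      calc (Ideal.span {x, y, z}).radical
          ≤ ((Ideal.span {u, v, w}).radical).radical := by
            apply Ideal.radical_mono
            rw [Ideal.span_le]
            intro r hr
            rcases hr with rfl | rfl | rfl
            · exact hxr
            · exact hyr
            · exact hzr
        _ = (Ideal.span {u, v, w}).radical := Ideal.radical_idem _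
  -- membership facts for the three completed triples
  -- triple (a, b, y)
  have haby : ∀ u v : R, ({u, v} : Set R) = {a, b} →
      (Ideal.span {u, v, y}).radical = maximalIdeal R := by
    intro u v huv
    have hsp : Ideal.span {u, v, y} = Ideal.span {a, b, y} := by
      congr 1
      rw [Set.pair_comm v y, Set.insert_comm u y, Set.pair_comm b y,
        Set.insert_comm a y, huv]
    rw [hsp]
    have hyI : y ∈ Ideal.span ({a, b, y} : Set R) := Ideal.subset_span (by simp)
    have haI : a ∈ Ideal.span ({a, b, y} : Set R) := Ideal.subset_span (by simp)
    have hbI : b ∈ Ideal.span ({a, b, y} : Set R) := Ideal.subset_span (by simp)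
    have hzI : z ^ (γ + γ') ∈ Ideal.span ({a, b, y} : Set R) := by
      have hEq : z ^ (γ + γ') = a + x ^ α' * y ^ β := by rw [ha]; ring
      rw [hEq]
      exact add_mem haI
        (Ideal.mul_mem_left _ _ (Ideal.pow_mem_of_mem _ hyI _ hβ))
    have hxI : x ^ (α + α') ∈ Ideal.span ({a, b, y} : Set R) := by
      have hEq : x ^ (α + α') = b + y ^ β' * z ^ γ := by rw [hb]; ring
      rw [hEq]
      exact add_mem hbI
        (Ideal.mul_mem_right _ _ (Ideal.pow_mem_of_mem _ hyI _ hβ'))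
    have h1 : ({a, b} : Set R) = {u, v} := huv.symm
    have hu' : u ∈ maximalIdeal R := by
      have : u ∈ ({a, b} : Set R) := huv ▸ (by simp)
      rcases this with rfl | rfl
      · exact hma
      · exact hmb
    have hv' : v ∈ maximalIdeal R := by
      have : v ∈ ({a, b} : Set R) := huv ▸ (by simp)
      rcases this with rfl | rfl
      · exact hma
      · exact hmb
    rw [← hsp] at hzI hxI hyI ⊢
    refine key u v y hu' hv' hy ?_ ?_ ?_
    · exact Ideal.mem_radical_iff.mpr ⟨α + α', hxI⟩
    · exact Ideal.le_radical hyI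
    · exact Ideal.mem_radical_iff.mpr ⟨γ + γ', hzI⟩
  -- triple (a, c, x)
  have hacx : ∀ u v : R, ({u, v} : Set R) = {a, c} →
      (Ideal.span {u, v, x}).radical = maximalIdeal R := by
    intro u v huv
    have hsp : Ideal.span {u, v, x} = Ideal.span {a, c, x} := by
      congr 1
      rw [Set.pair_comm v x, Set.insert_comm u x, Set.pair_comm c x,
        Set.insert_comm a x, huv]
    rw [hsp]
    have hxI : x ∈ Ideal.span ({a, c, x} : Set R) := Ideal.subset_span (by simp)
    have haI : a ∈ Ideal.span ({a, c, x} : Set R) := Ideal.subset_span (by simp)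
    have hcI : c ∈ Ideal.span ({a, c, x} : Set R) := Ideal.subset_span (by simp)
    have hzI : z ^ (γ + γ') ∈ Ideal.span ({a, c, x} : Set R) := by
      have hEq : z ^ (γ + γ') = a + x ^ α' * y ^ β := by rw [ha]; ring
      rw [hEq]
      exact add_mem haI
        (Ideal.mul_mem_right _ _ (Ideal.pow_mem_of_mem _ hxI _ hα'))
    have hyI : y ^ (β + β') ∈ Ideal.span ({a, c, x} : Set R) := by
      have hEq : y ^ (β + β') = c + x ^ α * z ^ γ' := by rw [hc]; ring
      rw [hEq]
      exact add_mem hcI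
        (Ideal.mul_mem_right _ _ (Ideal.pow_mem_of_mem _ hxI _ hα))
    have hu' : u ∈ maximalIdeal R := by
      have : u ∈ ({a, c} : Set R) := huv ▸ (by simp)
      rcases this with rfl | rfl
      · exact hma
      · exact hmc
    have hv' : v ∈ maximalIdeal R := by
      have : v ∈ ({a, c} : Set R) := huv ▸ (by simp)
      rcases this with rfl | rfl
      · exact hma
      · exact hmc
    rw [← hsp] at hzI hxI hyI ⊢
    refine key u v x hu' hv' hx ?_ ?_ ?_
    · exact Ideal.le_radical hxI
    · exact Ideal.mem_radical_iff.mpr ⟨β + β', hyI⟩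
    · exact Ideal.mem_radical_iff.mpr ⟨γ + γ', hzI⟩
  -- triple (b, c, z)
  have hbcz : ∀ u v : R, ({u, v} : Set R) = {b, c} →
      (Ideal.span {u, v, z}).radical = maximalIdeal R := by
    intro u v huv
    have hsp : Ideal.span {u, v, z} = Ideal.span {b, c, z} := by
      congr 1
      rw [Set.pair_comm v z, Set.insert_comm u z, Set.pair_comm c z,
        Set.insert_comm b z, huv]
    rw [hsp]
    have hzI : z ∈ Ideal.span ({b, c, z} : Set R) := Ideal.subset_span (by simp)
    have hbI : b ∈ Ideal.span ({b, c, z} : Set R) := Ideal.subset_span (by simp)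
    have hcI : c ∈ Ideal.span ({b, c, z} : Set R) := Ideal.subset_span (by simp)
    have hxI : x ^ (α + α') ∈ Ideal.span ({b, c, z} : Set R) := by
      have hEq : x ^ (α + α') = b + y ^ β' * z ^ γ := by rw [hb]; ring
      rw [hEq]
      exact add_mem hbI
        (Ideal.mul_mem_left _ _ (Ideal.pow_mem_of_mem _ hzI _ hγ))
    have hyI : y ^ (β + β') ∈ Ideal.span ({b, c, z} : Set R) := by
      have hEq : y ^ (β + β') = c + x ^ α * z ^ γ' := by rw [hc]; ring
      rw [hEq]
      exact add_mem hcI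
        (Ideal.mul_mem_left _ _ (Ideal.pow_mem_of_mem _ hzI _ hγ'))
    have hu' : u ∈ maximalIdeal R := by
      have : u ∈ ({b, c} : Set R) := huv ▸ (by simp)
      rcases this with rfl | rfl
      · exact hmb
      · exact hmc
    have hv' : v ∈ maximalIdeal R := by
      have : v ∈ ({b, c} : Set R) := huv ▸ (by simp)
      rcases this with rfl | rfl
      · exact hmb
      · exact hmc
    rw [← hsp] at hzI hxI hyI ⊢
    refine key u v z hu' hv' hz ?_ ?_ ?_
    · exact Ideal.mem_radical_iff.mpr ⟨α + α', hxI⟩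
    · exact Ideal.mem_radical_iff.mpr ⟨β + β', hyI⟩
    · exact Ideal.le_radical hzI
  -- assemble
  have finish : ∀ u v w : R, (Ideal.span {u, v, w}).radical = maximalIdeal R →
      u ∈ maximalIdeal R → v ∈ maximalIdeal R →
      (∃ w : R, (Ideal.span {u, v, w}).radical = maximalIdeal R) ∧
        RingTheory.Sequence.IsRegular R [u, v] := by
    intro u v w hrad hu hv
    refine ⟨⟨w, hrad⟩, aux_prefix_two (hCM u v w hrad) ?_⟩
    intro htop
    apply (maximalIdeal.isMaximal R).ne_top
    rw [← top_le_iff, ← htop, Ideal.span_le]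
    intro r hr
    rcases hr with rfl | rfl
    · exact hu
    · exact hv
  intro u v huv
  rcases huv with h | h | h | h | h | h <;>
    (injection h with h1 h2; subst h1; subst h2)
  · exact finish _ _ y (haby _ _ rfl) hma hmb
  · exact finish _ _ y (haby _ _ (Set.pair_comm _ _)) hmb hma
  · exact finish _ _ x (hacx _ _ rfl) hma hmc
  · exact finish _ _ x (hacx _ _ (Set.pair_comm _ _)) hmc hma
  · exact finish _ _ z (hbcz _ _ rfl) hmb hmc
  · exact finish _ _ z (hbcz _ _ (Set.pair_comm _ _)) hmc hmb
end

section
/- With the same setup, the sequence a, b, c is an unconditioned d-sequence in R; that is, every permutation of a, b, c is a d-sequence. In particular, (a,b)R :_R c² = (a,b)R :_R c. -/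
open IsLocalRing

/-! The minors satisfy `x ^ α' * c ∈ (a, b)` and `c + x ^ α * z ^ γ' = y ^ (β + β')`. If
`s * c ^ 2 ∈ (a, b)`, expanding `(c + x ^ α * z ^ γ') ^ α'` therefore gives
`s * c * y ^ ((β + β') * α') ∈ (a, b)`; since `a, b, y ^ N` is again a system of parameters, hence
a regular sequence, `s * c ∈ (a, b)`. The regularity of `a, b` and of `b, a` supplies the first two
conditions of a d-sequence, and the cyclic symmetry `x ↦ y ↦ z ↦ x`, `a ↦ b ↦ c ↦ a` of the
minors handles the remaining orderings. -/

/-- `s = [a₁, ..., aₙ]` is a d-sequence if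
`(a₁,...,a_{i-1}) : aᵢaⱼ = (a₁,...,a_{i-1}) : aⱼ` for all `i ≤ j`. -/
def IsDSequence {R : Type*} [CommRing R] (s : List R) : Prop :=
  ∀ i j : Fin s.length, (i : ℕ) ≤ (j : ℕ) →
    Submodule.colon (Ideal.ofList (s.take i)) (Ideal.span {s.get i * s.get j}) =
      Submodule.colon (Ideal.ofList (s.take i)) (Ideal.span {s.get j})

lemma List.perm_three_cases {α : Type*} {t : List α} {a b c : α} (h : t.Perm [a, b, c]) :
    t = [a, b, c] ∨ t = [a, c, b] ∨ t = [b, a, c] ∨ t = [b, c, a] ∨ t = [c, a, b] ∨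
      t = [c, b, a] := by
  rw [← List.mem_permutations] at h
  simp only [List.permutations, List.permutationsAux, List.permutationsAux.rec, List.foldr_cons,
    List.foldr_nil, List.permutationsAux2_snd_nil, List.permutationsAux2_snd_cons,
    List.append_nil, id_eq, List.cons_append, List.nil_append, List.mem_cons, List.not_mem_nil,
    or_false] at h
  tauto

section

open RingTheory.Sequence

variable {R : Type*} [CommRing R]

lemma Ideal.ofList_pair (u v : R) : Ideal.ofList [u, v] = Ideal.span {u, v} := by
  simp [Ideal.ofList_cons, Ideal.span_insert]

lemma Ideal.colon_span_mul_eq {I : Ideal R} {u : R} (hu : ∀ s, s * u ∈ I → s ∈ I) (v : R) :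
    I.colon (Ideal.span {u * v}) = I.colon (Ideal.span {v}) := by
  ext s
  simp only [Ideal.mem_colon_span_singleton]
  exact ⟨fun h ↦ hu _ (by rwa [mul_right_comm, mul_assoc]),
    fun h ↦ by rw [mul_left_comm]; exact Ideal.mul_mem_left _ _ h⟩

lemma RingTheory.Sequence.IsWeaklyRegular.mem_of_mul_mem {rs : List R}
    (h : IsWeaklyRegular R rs) {i : ℕ} (hi : i < rs.length) (s : R)
    (hs : s * rs[i] ∈ Ideal.ofList (rs.take i)) : s ∈ Ideal.ofList (rs.take i) := by
  have hreg := h.regular_mod_prev i hi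
  rw [Ideal.smul_eq_mul, Ideal.mul_top] at hreg
  exact mem_of_isSMulRegular_quotient_of_smul_mem hreg (by rwa [smul_eq_mul, mul_comm])

lemma isDSequence_append_singleton {s : List R} {r : R} (hs : IsWeaklyRegular R s)
    (hr : (Ideal.ofList s).colon (Ideal.span {r ^ 2}) =
      (Ideal.ofList s).colon (Ideal.span {r})) :
    IsDSequence (s ++ [r]) := by
  rintro ⟨i, hi⟩ ⟨j, hj⟩ (hij : i ≤ j)
  simp only [List.length_append, List.length_singleton] at hi hj
  simp only [List.get_eq_getElem]
  rcases Nat.lt_or_ge i s.length with his | his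
  · rw [List.take_append_of_le_length his.le, List.getElem_append_left his]
    exact Ideal.colon_span_mul_eq (hs.mem_of_mul_mem his) _
  · obtain rfl : i = s.length := by omega
    obtain rfl : j = s.length := by omega
    simpa [sq] using hr

lemma isDSequence_of_isWeaklyRegular {u v w t : R} (hreg : IsWeaklyRegular R [u, v, t])
    (hw : (Ideal.span {u, v}).colon (Ideal.span {w ^ 2}) =
      (Ideal.span {u, v}).colon (Ideal.span {w})) :
    IsDSequence [u, v, w] :=
  isDSequence_append_singleton (s := [u, v])
    ((isWeaklyRegular_append_iff R [u, v] [t]).mp hreg).1 (Ideal.ofList_pair u v ▸ hw)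

lemma isDSequence_of_radical_eq [IsLocalRing R]
    (hCM : ∀ u v w : R, (Ideal.span {u, v, w}).radical = maximalIdeal R →
      IsRegular R [u, v, w])
    {u v w t : R} (hrad : (Ideal.span {u, v, t}).radical = maximalIdeal R)
    (hw : (Ideal.span {u, v}).colon (Ideal.span {w ^ 2}) =
      (Ideal.span {u, v}).colon (Ideal.span {w})) :
    IsDSequence [u, v, w] ∧ IsDSequence [v, u, w] :=
  ⟨isDSequence_of_isWeaklyRegular (hCM u v t hrad).1 hw,
    isDSequence_of_isWeaklyRegular (hCM v u t (by rwa [Set.insert_comm])).1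
      (by rwa [Set.pair_comm])⟩

lemma Ideal.colon_sq_eq_colon_of_pow_mul_mem {J : Ideal R} {c g : R} {n : ℕ}
    (hg : g ^ n * c ∈ J) (hreg : ∀ s, s * (c + g) ^ n ∈ J → s ∈ J) :
    J.colon (Ideal.span {c ^ 2}) = J.colon (Ideal.span {c}) := by
  refine le_antisymm (fun s hs ↦ ?_) (Submodule.colon_mono le_rfl ?_)
  · rw [Ideal.mem_colon_span_singleton] at hs ⊢
    obtain ⟨q, hq⟩ : c ∣ (c + g) ^ n - g ^ n := by
      simpa using sub_dvd_pow_sub_pow (c + g) g n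
    apply hreg
    rw [sub_eq_iff_eq_add.mp hq,
      show s * c * (c * q + g ^ n) = q * (s * c ^ 2) + s * (g ^ n * c) by ring]
    exact add_mem (J.mul_mem_left _ hs) (J.mul_mem_left _ hg)
  · exact SetLike.coe_subset_coe.mpr
      (Ideal.span_singleton_le_span_singleton.mpr (dvd_pow_self c two_ne_zero))

lemma IsLocalRing.radical_eq_maximalIdeal_of_le [IsLocalRing R] {I J : Ideal R}
    (hJ : J.radical = maximalIdeal R) (hI : I ≤ maximalIdeal R) (hJI : J ≤ I.radical) :
    I.radical = maximalIdeal R :=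
  le_antisymm ((maximalIdeal.isMaximal R).isPrime.radical_le_iff.mpr hI)
    (hJ ▸ Ideal.radical_le_radical_iff.mpr hJI)

section Minors

variable {x y z a b c : R} {α β γ α' β' γ' : ℕ}

lemma pow_mul_minor_mem_span (ha : a = z ^ (γ + γ') - x ^ α' * y ^ β)
    (hb : b = x ^ (α + α') - y ^ β' * z ^ γ) (hc : c = y ^ (β + β') - x ^ α * z ^ γ') :
    x ^ α' * c ∈ Ideal.span {a, b} := by
  rw [show x ^ α' * c = -y ^ β' * a + -z ^ γ' * b by rw [ha, hb, hc]; ring]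
  exact add_mem (Ideal.mul_mem_left _ _ (Ideal.subset_span (by simp)))
    (Ideal.mul_mem_left _ _ (Ideal.subset_span (by simp)))

lemma radical_span_minors_pow_eq [IsLocalRing R]
    (hsop : (Ideal.span {x, y, z}).radical = maximalIdeal R)
    (hβ : 0 < β) (hα' : 0 < α') (hβ' : 0 < β') (hγ' : 0 < γ') {N : ℕ} (hN : 0 < N)
    (ha : a = z ^ (γ + γ') - x ^ α' * y ^ β) (hb : b = x ^ (α + α') - y ^ β' * z ^ γ) :
    (Ideal.span {a, b, y ^ N}).radical = maximalIdeal R := by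
  set I := Ideal.span {a, b, y ^ N}
  have hm : ∀ {t}, t ∈ ({x, y, z} : Set R) → t ∈ maximalIdeal R := fun ht ↦
    hsop ▸ Ideal.le_radical (Ideal.subset_span ht)
  have hy : y ∈ I.radical := Ideal.mem_radical_of_pow_mem (m := N)
    (Ideal.le_radical (Ideal.subset_span (by simp)))
  have ha' : a ∈ I.radical := Ideal.le_radical (Ideal.subset_span (by simp))
  have hb' : b ∈ I.radical := Ideal.le_radical (Ideal.subset_span (by simp))
  refine radical_eq_maximalIdeal_of_le hsop ?_ ?_
  · simp only [I, Ideal.span_le, Set.insert_subset_iff, Set.singleton_subset_iff, SetLike.mem_coe]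
    refine ⟨?_, ?_, ?_⟩
    · rw [ha]
      exact sub_mem (Ideal.pow_mem_of_mem _ (hm (by simp)) _ (by omega))
        (Ideal.mul_mem_right _ _ (Ideal.pow_mem_of_mem _ (hm (by simp)) _ hα'))
    · rw [hb]
      exact sub_mem (Ideal.pow_mem_of_mem _ (hm (by simp)) _ (by omega))
        (Ideal.mul_mem_right _ _ (Ideal.pow_mem_of_mem _ (hm (by simp)) _ hβ'))
    · exact Ideal.pow_mem_of_mem _ (hm (by simp)) _ hN
  · simp only [Ideal.span_le, Set.insert_subset_iff, Set.singleton_subset_iff, SetLike.mem_coe]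
    refine ⟨?_, hy, ?_⟩
    · refine Ideal.mem_radical_of_pow_mem (m := α + α') ?_
      rw [show x ^ (α + α') = b + y ^ β' * z ^ γ by rw [hb]; ring]
      exact add_mem hb' (Ideal.mul_mem_right _ _ (Ideal.pow_mem_of_mem _ hy _ hβ'))
    · refine Ideal.mem_radical_of_pow_mem (m := γ + γ') ?_
      rw [show z ^ (γ + γ') = a + x ^ α' * y ^ β by rw [ha]; ring]
      exact add_mem ha' (Ideal.mul_mem_left _ _ (Ideal.pow_mem_of_mem _ hy _ hβ))

lemma colon_span_minors_sq_eq [IsLocalRing R]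
    (hCM : ∀ u v w : R, (Ideal.span {u, v, w}).radical = maximalIdeal R →
      IsRegular R [u, v, w])
    (hsop : (Ideal.span {x, y, z}).radical = maximalIdeal R)
    (hα : 0 < α) (hβ : 0 < β) (hα' : 0 < α') (hβ' : 0 < β') (hγ' : 0 < γ')
    (ha : a = z ^ (γ + γ') - x ^ α' * y ^ β) (hb : b = x ^ (α + α') - y ^ β' * z ^ γ)
    (hc : c = y ^ (β + β') - x ^ α * z ^ γ') :
    (Ideal.span {a, b}).colon (Ideal.span {c ^ 2}) =
      (Ideal.span {a, b}).colon (Ideal.span {c}) := by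
  obtain ⟨k, rfl⟩ : ∃ k, α = k + 1 := ⟨α - 1, by omega⟩
  refine Ideal.colon_sq_eq_colon_of_pow_mul_mem (g := x ^ (k + 1) * z ^ γ') (n := α') ?_ ?_
  · rw [show (x ^ (k + 1) * z ^ γ') ^ α' * c = x ^ (k * α') * z ^ (γ' * α') * (x ^ α' * c) by
      ring]
    exact Ideal.mul_mem_left _ _ (pow_mul_minor_mem_span ha hb hc)
  · have hreg := (hCM a b _ (radical_span_minors_pow_eq hsop hβ hα' hβ' hγ'
      (N := (β + β') * α') (by positivity) ha hb)).toIsWeaklyRegular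
    have hcg : c + x ^ (k + 1) * z ^ γ' = y ^ (β + β') := by rw [hc]; ring
    intro s hs
    rw [← Ideal.ofList_pair] at hs ⊢
    exact hreg.mem_of_mul_mem (i := 2) (by simp) s (by rwa [pow_mul, ← hcg])

end Minors

end

theorem minors_unconditioned_dSequence_general
    {R : Type*} [CommRing R] [IsLocalRing R]
    (hCM : ∀ u v w : R, (Ideal.span {u, v, w}).radical = maximalIdeal R →
      RingTheory.Sequence.IsRegular R [u, v, w])
    (x y z : R) (hsop : (Ideal.span {x, y, z}).radical = maximalIdeal R)
    (α β γ α' β' γ' : ℕ)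
    (hα : 0 < α) (hβ : 0 < β) (hγ : 0 < γ)
    (hα' : 0 < α') (hβ' : 0 < β') (hγ' : 0 < γ')
    (a b c : R)
    (ha : a = z ^ (γ + γ') - x ^ α' * y ^ β)
    (hb : b = x ^ (α + α') - y ^ β' * z ^ γ)
    (hc : c = y ^ (β + β') - x ^ α * z ^ γ') :
    (∀ t : List R, t.Perm [a, b, c] → IsDSequence t) ∧
      Submodule.colon (Ideal.span {a, b}) (Ideal.span {c ^ 2}) =
        Submodule.colon (Ideal.span {a, b}) (Ideal.span {c}) := by
  have hsop' : (Ideal.span {y, z, x}).radical = maximalIdeal R := by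
    rwa [Set.pair_comm, Set.insert_comm]
  have hsop'' : (Ideal.span {z, x, y}).radical = maximalIdeal R := by
    rwa [Set.insert_comm, Set.pair_comm]
  have ha' : a = z ^ (γ + γ') - y ^ β * x ^ α' := by rw [ha, mul_comm]
  have hb' : b = x ^ (α + α') - z ^ γ * y ^ β' := by rw [hb, mul_comm]
  have hc' : c = y ^ (β + β') - z ^ γ' * x ^ α := by rw [hc, mul_comm]
  have hab := colon_span_minors_sq_eq hCM hsop hα hβ hα' hβ' hγ' ha hb hc
  have hbc := colon_span_minors_sq_eq hCM hsop' hβ hγ hβ' hγ' hα' hb hc' ha'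
  have hca := colon_span_minors_sq_eq hCM hsop'' hγ hα hγ' hα' hβ' hc' ha hb'
  obtain ⟨habc, hbac⟩ := isDSequence_of_radical_eq hCM
    (radical_span_minors_pow_eq hsop hβ hα' hβ' hγ' one_pos ha hb) hab
  obtain ⟨hbca, hcba⟩ := isDSequence_of_radical_eq hCM
    (radical_span_minors_pow_eq hsop' hγ hβ' hγ' hα' one_pos hb hc') hbc
  obtain ⟨hcab, hacb⟩ := isDSequence_of_radical_eq hCM
    (radical_span_minors_pow_eq hsop'' hα hγ' hα' hβ' one_pos hc' ha) hca
  refine ⟨fun t ht ↦ ?_, hab⟩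
  rcases List.perm_three_cases ht with rfl | rfl | rfl | rfl | rfl | rfl <;> assumption

/-- The maximal minors `a, b, c` of `((x^α, y^β, z^γ), (y^β', z^γ', x^α'))`
form an unconditioned d-sequence: every permutation of `a, b, c` is a
d-sequence.  In particular `(a,b) : c² = (a,b) : c`. -/
theorem minors_unconditioned_dSequence
    {R : Type*} [CommRing R] [IsNoetherianRing R] [IsLocalRing R]
    (hdim : ringKrullDim R = 3)
    (hCM : ∀ u v w : R, (Ideal.span {u, v, w}).radical = maximalIdeal R →
      RingTheory.Sequence.IsRegular R [u, v, w])
    (x y z : R) (hsop : (Ideal.span {x, y, z}).radical = maximalIdeal R)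
    (α β γ α' β' γ' : ℕ)
    (hα : 0 < α) (hβ : 0 < β) (hγ : 0 < γ)
    (hα' : 0 < α') (hβ' : 0 < β') (hγ' : 0 < γ')
    (a b c : R)
    (ha : a = z ^ (γ + γ') - x ^ α' * y ^ β)
    (hb : b = x ^ (α + α') - y ^ β' * z ^ γ)
    (hc : c = y ^ (β + β') - x ^ α * z ^ γ') :
    (∀ t : List R, t.Perm [a, b, c] → IsDSequence t) ∧
      Submodule.colon (Ideal.span {a, b}) (Ideal.span {c ^ 2}) =
        Submodule.colon (Ideal.span {a, b}) (Ideal.span {c}) :=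
  minors_unconditioned_dSequence_general hCM x y z hsop α β γ α' β' γ' hα hβ hγ hα' hβ' hγ' a b c ha
    hb hc
end
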